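/- arXiv:1707.01212 — 2 statements merged into one kernel-verified Lean document; each statement's English description precedes it below -/
import Mathlib

section
/- Weak submodularity (Theorem 4.3): for any disjoint subsets L, S ⊆ {1,…,n}, Σ_{j ∈ S} (f(L∪{j}) − f(L)) ≥ (c/C̃₁) · (f(L∪S) − f(L)), where C̃₁ = max_{1≤j≤n} K_{jj}. In particular the submodularity ratio of f is bounded below by c/C̃₁ > 0, so f is weakly submodular. -/
open Finset Matrix

noncomputable section

/-- The objective `l(w) = ⟨μ, w⟩ - (1/2) ⟨w, K w⟩`. -/
def obj {n : ℕ} (K : Matrix (Fin n) (Fin n) ℝ) (μ : Fin n → ℝ) (w : Fin n → ℝ) : ℝ :=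
  μ ⬝ᵥ w - (1 / 2) * (w ⬝ᵥ (K *ᵥ w))

/-- The feasible set `Ω_L = {w : w ≥ 0, w_j = 0 for j ∉ L}`. -/
def feas {n : ℕ} (L : Finset (Fin n)) : Set (Fin n → ℝ) :=
  {w | (∀ j, 0 ≤ w j) ∧ ∀ j ∉ L, w j = 0}

lemma dot_symm {n : ℕ} (K : Matrix (Fin n) (Fin n) ℝ) (hsymm : K.IsSymm)
    (a b : Fin n → ℝ) : a ⬝ᵥ (K *ᵥ b) = b ⬝ᵥ (K *ᵥ a) := by
  conv_lhs => rw [dotProduct_mulVec, ← hsymm.eq, vecMul_transpose, dotProduct_comm]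

lemma obj_expand {n : ℕ} (K : Matrix (Fin n) (Fin n) ℝ) (hsymm : K.IsSymm)
    (μ v d : Fin n → ℝ) :
    obj K μ (v + d) = obj K μ v + (μ - K *ᵥ v) ⬝ᵥ d - (1/2) * (d ⬝ᵥ (K *ᵥ d)) := by
  have h := dot_symm K hsymm v d
  simp only [obj, mulVec_add, dotProduct_add, add_dotProduct, sub_dotProduct]
  rw [h, dotProduct_comm (K *ᵥ v) d]
  ring

lemma single_quad {n : ℕ} (K : Matrix (Fin n) (Fin n) ℝ) (j : Fin n) (t : ℝ) :
    (Pi.single j t : Fin n → ℝ) ⬝ᵥ (K *ᵥ (Pi.single j t)) = K j j * t^2 := by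
  simp [mulVec_single, dotProduct, Pi.single_apply]
  ring

/-- Theorem 4.3 (Weak submodularity): for any disjoint `L, S`,
`∑_{j ∈ S} (f(L∪{j}) - f(L)) ≥ (c/C̃₁) (f(L∪S) - f(L))`, where `C̃₁ = max_j K_{jj}`. -/
theorem weak_submodularity (n : ℕ) (hn : 1 ≤ n)
    (K : Matrix (Fin n) (Fin n) ℝ) (hsymm : K.IsSymm) (hpd : K.PosDef)
    (μ : Fin n → ℝ)
    (ζ : Finset (Fin n) → Fin n → ℝ)
    (hζ : ∀ L : Finset (Fin n),
      ζ L ∈ feas L ∧ ∀ w ∈ feas L, obj K μ w ≤ obj K μ (ζ L))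
    (f : Finset (Fin n) → ℝ) (hf : ∀ L : Finset (Fin n), f L = obj K μ (ζ L))
    (c : ℝ) (hc : 0 < c)
    (hcK : ∀ x : Fin n → ℝ, c * (∑ j, (x j) ^ 2) ≤ x ⬝ᵥ (K *ᵥ x))
    (C₁ : ℝ) (hC₁ub : ∀ j, K j j ≤ C₁) (hC₁mem : ∃ j, C₁ = K j j)
    (L S : Finset (Fin n)) (hdisj : Disjoint L S) :
    ∑ j ∈ S, (f (insert j L) - f L) ≥ (c / C₁) * (f (L ∪ S) - f L) := by
  obtain ⟨⟨hLnn, hLz⟩, hoptL⟩ := hζ L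
  obtain ⟨⟨hSnn, hSz⟩, _⟩ := hζ (L ∪ S)
  set g : Fin n → ℝ := μ - K *ᵥ ζ L with hg
  set d : Fin n → ℝ := ζ (L ∪ S) - ζ L with hd
  set p : Fin n → ℝ := fun j => max (g j) 0 with hp
  -- diagonal entries are positive
  have hKdiag : ∀ j, c ≤ K j j := by
    intro j
    have h := hcK (Pi.single j 1)
    rw [single_quad] at h
    simpa [Pi.single_apply, Finset.sum_ite_eq'] using h
  have hKpos : ∀ j, 0 < K j j := fun j => lt_of_lt_of_le hc (hKdiag j)
  have hC₁pos : 0 < C₁ := by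
    obtain ⟨j, hj⟩ := hC₁mem
    exact hj ▸ hKpos j
  -- single-coordinate step formula
  have step : ∀ (j : Fin n) (t : ℝ),
      obj K μ (ζ L + Pi.single j t) = obj K μ (ζ L) + g j * t - (1/2) * (K j j * t^2) := by
    intro j t
    rw [obj_expand K hsymm, single_quad]
    congr 2
    simp [hg]
  -- KKT: gradient nonpositive on L
  have kkt1 : ∀ j ∈ L, g j ≤ 0 := by
    intro j hj
    by_contra h
    push_neg at h
    set t : ℝ := g j / K j j with ht
    have htpos : 0 < t := div_pos h (hKpos j)
    have hw : ζ L + Pi.single j t ∈ feas L := by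
      refine ⟨fun k => ?_, fun k hk => ?_⟩
      · rcases eq_or_ne k j with rfl | hkj
        · simp only [Pi.add_apply, Pi.single_eq_same]
          linarith [hLnn k, htpos]
        · simpa [Pi.single_eq_of_ne hkj] using hLnn k
      · have hkj : k ≠ j := fun hkj => hk (hkj ▸ hj)
        simp [Pi.single_eq_of_ne hkj, hLz k hk]
    have hle := hoptL _ hw
    rw [step] at hle
    have hKt : K j j * t = g j := by rw [ht]; field_simp [(hKpos j).ne']
    nlinarith [mul_pos h htpos, (hKpos j)]
  -- KKT: complementary slackness
  have kkt2 : ∀ j, g j * ζ L j = 0 := by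
    intro j
    rcases eq_or_ne (ζ L j) 0 with h0 | h0
    · simp [h0]
    by_cases hjL : j ∈ L
    swap
    · exact absurd (hLz j hjL) h0
    have hζpos : 0 < ζ L j := lt_of_le_of_ne (hLnn j) (Ne.symm h0)
    have hgle := kkt1 j hjL
    rcases eq_or_lt_of_le hgle with heq | hlt
    · simp [heq]
    exfalso
    set t : ℝ := min (ζ L j) (-g j / K j j) with ht
    have htpos : 0 < t := lt_min hζpos (div_pos (by linarith) (hKpos j))
    have hw : ζ L + Pi.single j (-t) ∈ feas L := by
      refine ⟨fun k => ?_, fun k hk => ?_⟩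
      · rcases eq_or_ne k j with rfl | hkj
        · simp only [Pi.add_apply, Pi.single_eq_same]
          have : t ≤ ζ L k := min_le_left _ _
          linarith
        · simpa [Pi.single_eq_of_ne hkj] using hLnn k
      · have hkj : k ≠ j := fun hkj => hk (hkj ▸ hjL)
        simp [Pi.single_eq_of_ne hkj, hLz k hk]
    have hle := hoptL _ hw
    rw [step] at hle
    have hKt : K j j * t ≤ -g j := by
      have h1 : t ≤ -g j / K j j := min_le_right _ _
      rw [le_div_iff₀ (hKpos j)] at h1
      linarith [h1]
    nlinarith [mul_pos (neg_pos.mpr hlt) htpos, hKpos j, htpos]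
  -- per-element lower bound
  have perel : ∀ j ∈ S, p j ^ 2 / (2 * C₁) ≤ f (insert j L) - f L := by
    intro j hjS
    set t : ℝ := p j / K j j with ht
    have hpnn : 0 ≤ p j := le_max_right _ _
    have htnn : 0 ≤ t := div_nonneg hpnn (hKpos j).le
    have hw : ζ L + Pi.single j t ∈ feas (insert j L) := by
      refine ⟨fun k => ?_, fun k hk => ?_⟩
      · rcases eq_or_ne k j with rfl | hkj
        · simp only [Pi.add_apply, Pi.single_eq_same]
          have := hLnn k
          linarith
        · simpa [Pi.single_eq_of_ne hkj] using hLnn k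
      · simp only [Finset.mem_insert, not_or] at hk
        simp [Pi.single_eq_of_ne hk.1, hLz k hk.2]
    obtain ⟨_, hoptj⟩ := hζ (insert j L)
    have hle := hoptj _ hw
    rw [step] at hle
    have hgp : g j * p j = p j ^ 2 := by
      rcases le_or_gt (g j) 0 with h | h
      · simp [hp, max_eq_right h]
      · simp [hp, max_eq_left h.le]; ring
    have hKt2 : K j j * t = p j := by rw [ht]; field_simp [(hKpos j).ne']
    have hgt : g j * t = p j ^ 2 / K j j := by
      rw [ht, eq_div_iff (hKpos j).ne']
      field_simp [(hKpos j).ne']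
      linarith [hgp]
    have hval : g j * t - (1/2) * (K j j * t^2) = p j ^ 2 / (2 * K j j) := by
      have : K j j * t ^ 2 = p j * t := by rw [pow_two, ← mul_assoc, hKt2]
      rw [this, hgt, ht]
      field_simp
      ring
    have hdivle : p j ^ 2 / (2 * C₁) ≤ p j ^ 2 / (2 * K j j) := by
      apply div_le_div_of_nonneg_left (by positivity) (by linarith [hKpos j])
      linarith [hC₁ub j]
    rw [hf (insert j L), hf L]
    calc p j ^ 2 / (2 * C₁) ≤ p j ^ 2 / (2 * K j j) := hdivle
      _ = obj K μ (ζ L + Pi.single j t) - obj K μ (ζ L) := by rw [step]; linarith [hval]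
      _ ≤ obj K μ (ζ (insert j L)) - obj K μ (ζ L) := by linarith [hle, step j t]
  -- upper bound on f (L ∪ S) - f L
  have dS : ∀ j ∈ S, 0 ≤ d j := by
    intro j hjS
    have hjL : j ∉ L := fun h => (Finset.disjoint_left.mp hdisj h) hjS
    simp [hd, hLz j hjL, hSnn j]
  have upper : f (L ∪ S) - f L ≤ ∑ j ∈ S, p j ^ 2 / (2 * c) := by
    have hsum : ζ L + d = ζ (L ∪ S) := by simp [hd]
    have hexp : f (L ∪ S) = f L + g ⬝ᵥ d - (1/2) * (d ⬝ᵥ (K *ᵥ d)) := by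
      rw [hf (L ∪ S), hf L, ← hsum, obj_expand K hsymm]
    have hgd : g ⬝ᵥ d ≤ ∑ j ∈ S, p j * d j := by
      have h1 : ∀ j ∈ Sᶜ, g j * d j ≤ 0 := by
        intro j hj
        simp only [Finset.mem_compl] at hj
        by_cases hjL : j ∈ L
        · have h2 : g j * d j = g j * ζ (L ∪ S) j := by
            simp only [hd, Pi.sub_apply]
            have := kkt2 j
            ring_nf
            nlinarith [kkt2 j]
          rw [h2]
          exact mul_nonpos_of_nonpos_of_nonneg (kkt1 j hjL) (hSnn j)
        · have : d j = 0 := by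
            simp [hd, hLz j hjL, hSz j (by simp [hjL, hj])]
          simp [this]
      have h2 : ∀ j ∈ S, g j * d j ≤ p j * d j :=
        fun j hj => mul_le_mul_of_nonneg_right (le_max_left _ _) (dS j hj)
      calc g ⬝ᵥ d = ∑ j ∈ S, g j * d j + ∑ j ∈ Sᶜ, g j * d j :=
            (Finset.sum_add_sum_compl S _).symm
        _ ≤ ∑ j ∈ S, p j * d j + 0 := by
            gcongr ?_ + ?_
            · exact Finset.sum_le_sum h2
            · exact Finset.sum_nonpos h1
        _ = ∑ j ∈ S, p j * d j := by ring
    have hquad : c * ∑ j ∈ S, d j ^ 2 ≤ d ⬝ᵥ (K *ᵥ d) := by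
      refine le_trans ?_ (hcK d)
      apply mul_le_mul_of_nonneg_left _ hc.le
      exact Finset.sum_le_sum_of_subset_of_nonneg (Finset.subset_univ S)
        (fun j _ _ => sq_nonneg _)
    have hterm : ∀ j ∈ S, p j * d j - (c/2) * d j ^ 2 ≤ p j ^ 2 / (2 * c) := by
      intro j hj
      have := sq_nonneg (p j - c * d j)
      have h2c : 0 < 2 * c := by linarith
      rw [le_div_iff₀ h2c]
      nlinarith
    calc f (L ∪ S) - f L = g ⬝ᵥ d - (1/2) * (d ⬝ᵥ (K *ᵥ d)) := by rw [hexp]; ring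
      _ ≤ ∑ j ∈ S, p j * d j - (c/2) * ∑ j ∈ S, d j ^ 2 := by
          have := hgd
          nlinarith [hquad]
      _ = ∑ j ∈ S, (p j * d j - (c/2) * d j ^ 2) := by
          rw [Finset.sum_sub_distrib, Finset.mul_sum]
      _ ≤ ∑ j ∈ S, p j ^ 2 / (2 * c) := Finset.sum_le_sum hterm
  -- combine
  have hratio : 0 ≤ c / C₁ := by positivity
  calc (c / C₁) * (f (L ∪ S) - f L)
      ≤ (c / C₁) * ∑ j ∈ S, p j ^ 2 / (2 * c) := mul_le_mul_of_nonneg_left upper hratio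
    _ = ∑ j ∈ S, p j ^ 2 / (2 * C₁) := by
        rw [Finset.mul_sum]
        apply Finset.sum_congr rfl
        intro j _
        field_simp
    _ ≤ ∑ j ∈ S, (f (insert j L) - f L) := Finset.sum_le_sum perel
end
end

section
/- Single-step comparison of ProtoDash and ProtoGreedy: let L ⊆ {1,…,n} be a proper subset and let v ∉ L satisfy (μ − Kζ^L)_v ≥ (μ − Kζ^L)_j for all j ∉ L (the ProtoDash choice). Then for every u ∉ L, f(L∪{v}) − f(L) ≥ (3c/(4C̃₁)) · (f(L∪{u}) − f(L)), where C̃₁ = max_{1≤j≤n} K_{jj}. -/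
open Finset Matrix

noncomputable section

/-!
Write `g = μ - K ζ^L`. Moving `ζ^L` along the coordinate `v` by the optimal step `g_v⁺ / K_vv`
stays in `Ω_{L ∪ {v}}` and gains `(g_v⁺)² / (2 K_vv) ≥ (g_v⁺)² / (2 C̃₁)`. Conversely the KKT
conditions of `ζ^L` (`g_j ≤ 0` and `g_j ζ^L_j = 0` for `j ∈ L`) give `⟨g, w - ζ^L⟩ ≤ g_u⁺ w_u` for
every `w ∈ Ω_{L ∪ {u}}`, and coercivity bounds the quadratic term below by `c w_u² / 2`, so
`l(w) - l(ζ^L) ≤ (g_u⁺)² / (2c)`. Since `g_u ≤ g_v`, the gains compare with ratio `c / C̃₁`.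
-/

theorem posPart_mul_eq_posPart_sq (g : ℝ) : g⁺ * g = g⁺ ^ 2 := by
  rcases le_total g 0 with hg | hg
  · simp [posPart_eq_zero.2 hg]
  · rw [posPart_eq_self.2 hg, sq]

theorem nonpos_and_mul_eq_zero_of_forall_le {a g x : ℝ} (ha : 0 < a) (hx : 0 ≤ x)
    (h : ∀ t, -x ≤ t → t * g - t ^ 2 * a / 2 ≤ 0) : g ≤ 0 ∧ g * x = 0 := by
  have hg : g ≤ 0 := by
    by_contra! hg
    have hgain : g / a * g - (g / a) ^ 2 * a / 2 = g ^ 2 / (2 * a) := by field_simp; ring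
    have := h (g / a) (by linarith [div_pos hg ha])
    linarith [show 0 < g ^ 2 / (2 * a) by positivity]
  refine ⟨hg, ?_⟩
  rcases hg.eq_or_lt with rfl | hg
  · exact zero_mul x
  rcases hx.eq_or_lt with rfl | hx
  · exact mul_zero g
  exfalso
  set t := max (-x) (g / a)
  have ht : t < 0 := max_lt (by linarith) (div_neg_of_neg_of_pos hg ha)
  have hta : g ≤ t * a := (div_le_iff₀ ha).1 (le_max_right _ _)
  -- `t * g - t ^ 2 * a / 2 = t * (g - t * a / 2)` is a product of two negative numbers
  nlinarith [h t (le_max_left _ _), mul_pos_of_neg_of_neg ht (show g - t * a / 2 < 0 by linarith)]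

section

variable {n : ℕ} {K : Matrix (Fin n) (Fin n) ℝ} {μ : Fin n → ℝ}

theorem obj_add (hK : K.IsSymm) (w d : Fin n → ℝ) :
    obj K μ (w + d) = obj K μ w + (μ - K *ᵥ w) ⬝ᵥ d - d ⬝ᵥ (K *ᵥ d) / 2 := by
  have hwd : w ⬝ᵥ (K *ᵥ d) = d ⬝ᵥ (K *ᵥ w) := by
    rw [dotProduct_mulVec, ← mulVec_transpose, hK.eq, dotProduct_comm]
  simp only [obj, mulVec_add, add_dotProduct, dotProduct_add, sub_dotProduct, hwd,
    dotProduct_comm (K *ᵥ w) d]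
  ring

theorem obj_add_single (hK : K.IsSymm) (w : Fin n → ℝ) (j : Fin n) (t : ℝ) :
    obj K μ (w + Pi.single j t) = obj K μ w + t * (μ - K *ᵥ w) j - t ^ 2 * K j j / 2 := by
  rw [obj_add hK, dotProduct_single, mulVec_single, single_dotProduct]
  simp only [Pi.smul_apply, col_apply, MulOpposite.smul_eq_mul_unop, MulOpposite.unop_op]
  ring

theorem feas_mono {L L' : Finset (Fin n)} (h : L ⊆ L') : feas L ⊆ feas L' :=
  fun _ hw => ⟨hw.1, fun j hj => hw.2 j fun hjL => hj (h hjL)⟩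

theorem add_single_mem_feas {L : Finset (Fin n)} {w : Fin n → ℝ} (hw : w ∈ feas L)
    {j : Fin n} (hj : j ∈ L) {t : ℝ} (ht : -w j ≤ t) : w + Pi.single j t ∈ feas L := by
  refine ⟨fun i => ?_, fun i hi => ?_⟩
  · rcases eq_or_ne i j with rfl | hij
    · simp only [Pi.add_apply, Pi.single_eq_same]; linarith
    · simpa [hij] using hw.1 i
  · have hij : i ≠ j := fun h => hi (h ▸ hj)
    simp [hij, hw.2 i hi]

theorem le_diag_of_coercive {c : ℝ} (hcK : ∀ x : Fin n → ℝ, c * ∑ j, x j ^ 2 ≤ x ⬝ᵥ (K *ᵥ x))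
    (j : Fin n) : c ≤ K j j := by
  simpa [mulVec_single, single_dotProduct, Pi.single_apply] using hcK (Pi.single j 1)

theorem kkt_of_isMaxOn (hK : K.IsSymm) {L : Finset (Fin n)} {z : Fin n → ℝ}
    (hz : z ∈ feas L) (hmax : IsMaxOn (obj K μ) (feas L) z) {j : Fin n} (hj : j ∈ L)
    (hjj : 0 < K j j) : (μ - K *ᵥ z) j ≤ 0 ∧ (μ - K *ᵥ z) j * z j = 0 :=
  nonpos_and_mul_eq_zero_of_forall_le hjj (hz.1 j) fun t ht => by
    have := isMaxOn_iff.1 hmax _ (add_single_mem_feas hz hj ht)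
    rw [obj_add_single hK] at this
    linarith

theorem posPart_sq_div_le_of_isMaxOn (hK : K.IsSymm) {L : Finset (Fin n)} {w z : Fin n → ℝ}
    (hw : w ∈ feas L) (hmax : IsMaxOn (obj K μ) (feas L) z) {j : Fin n} (hj : j ∈ L)
    (hjj : 0 < K j j) : ((μ - K *ᵥ w) j)⁺ ^ 2 / (2 * K j j) ≤ obj K μ z - obj K μ w := by
  set g := (μ - K *ᵥ w) j
  have hstep : w + Pi.single j (g⁺ / K j j) ∈ feas L := by
    refine add_single_mem_feas hw hj ?_
    linarith [hw.1 j, show 0 ≤ g⁺ / K j j by positivity]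
  have := isMaxOn_iff.1 hmax _ hstep
  rw [obj_add_single hK] at this
  have hgain : g⁺ / K j j * g - (g⁺ / K j j) ^ 2 * K j j / 2 = g⁺ ^ 2 / (2 * K j j) := by
    rw [div_mul_eq_mul_div, posPart_mul_eq_posPart_sq]; field_simp; ring
  linarith

theorem dotProduct_eq_zero_of_mul_eq_zero {L : Finset (Fin n)} {g z : Fin n → ℝ}
    (hz : z ∈ feas L) (h : ∀ j ∈ L, g j * z j = 0) : g ⬝ᵥ z = 0 :=
  sum_eq_zero fun j _ => if hj : j ∈ L then h j hj else by simp [hz.2 j hj]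

theorem dotProduct_le_of_nonpos {L : Finset (Fin n)} {g w : Fin n → ℝ} {u : Fin n}
    (hg : ∀ j ∈ L, g j ≤ 0) (hw : w ∈ feas (insert u L)) : g ⬝ᵥ w ≤ g u * w u := by
  rw [dotProduct, ← sum_erase_add _ _ (mem_univ u)]
  have hrest : ∑ j ∈ univ.erase u, g j * w j ≤ 0 := sum_nonpos fun j hj => by
    by_cases hjL : j ∈ L
    · exact mul_nonpos_of_nonpos_of_nonneg (hg j hjL) (hw.1 j)
    · simp [hw.2 j (by simp [ne_of_mem_erase hj, hjL])]
  linarith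

theorem obj_sub_le_posPart_sq_div (hK : K.IsSymm) {c : ℝ} (hc : 0 < c)
    (hcK : ∀ x : Fin n → ℝ, c * ∑ j, x j ^ 2 ≤ x ⬝ᵥ (K *ᵥ x))
    {L : Finset (Fin n)} {z : Fin n → ℝ} (hz : z ∈ feas L)
    (hmax : IsMaxOn (obj K μ) (feas L) z) {u : Fin n} (hu : u ∉ L) {w : Fin n → ℝ}
    (hw : w ∈ feas (insert u L)) :
    obj K μ w - obj K μ z ≤ ((μ - K *ᵥ z) u)⁺ ^ 2 / (2 * c) := by
  set g := μ - K *ᵥ z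
  have hkkt : ∀ j ∈ L, g j ≤ 0 ∧ g j * z j = 0 := fun j hj =>
    kkt_of_isMaxOn hK hz hmax hj (hc.trans_le (le_diag_of_coercive hcK j))
  have hlin : g ⬝ᵥ (w - z) ≤ (g u)⁺ * w u := by
    rw [dotProduct_sub, dotProduct_eq_zero_of_mul_eq_zero hz fun j hj => (hkkt j hj).2, sub_zero]
    exact (dotProduct_le_of_nonpos (fun j hj => (hkkt j hj).1) hw).trans
      (mul_le_mul_of_nonneg_right (le_posPart _) (hw.1 u))
  have hquad : c * w u ^ 2 ≤ (w - z) ⬝ᵥ (K *ᵥ (w - z)) := by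
    have hdu : (w - z) u = w u := by simp [hz.2 u hu]
    refine le_trans ?_ (hcK (w - z))
    rw [← hdu]
    exact mul_le_mul_of_nonneg_left
      (single_le_sum (fun j _ => sq_nonneg ((w - z) j)) (mem_univ u)) hc.le
  have hexp := obj_add hK (μ := μ) z (w - z)
  rw [add_sub_cancel] at hexp
  -- `p s - c s ^ 2 / 2` is maximal at `s = p / c`
  have hamgm : (g u)⁺ * w u - c * w u ^ 2 / 2 ≤ (g u)⁺ ^ 2 / (2 * c) := by
    rw [le_div_iff₀ (by positivity)]
    nlinarith [sq_nonneg ((g u)⁺ - c * w u)]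
  linarith

end

theorem protodash_step_bound_general (n : ℕ)
    (K : Matrix (Fin n) (Fin n) ℝ) (hsymm : K.IsSymm)
    (μ : Fin n → ℝ)
    (ζ : Finset (Fin n) → Fin n → ℝ)
    (hζ : ∀ L : Finset (Fin n),
      ζ L ∈ feas L ∧ ∀ w ∈ feas L, obj K μ w ≤ obj K μ (ζ L))
    (f : Finset (Fin n) → ℝ) (hf : ∀ L : Finset (Fin n), f L = obj K μ (ζ L))
    (c : ℝ) (hc : 0 < c)
    (hcK : ∀ x : Fin n → ℝ, c * (∑ j, (x j) ^ 2) ≤ x ⬝ᵥ (K *ᵥ x))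
    (C₁ : ℝ) (hC₁ub : ∀ j, K j j ≤ C₁)
    (L : Finset (Fin n))
    (v : Fin n)
    (hvmax : ∀ j ∉ L, μ j - (K *ᵥ ζ L) j ≤ μ v - (K *ᵥ ζ L) v) :
    ∀ u ∉ L,
      f (insert v L) - f L ≥ (3 * c / (4 * C₁)) * (f (insert u L) - f L) := by
  intro u hu
  obtain ⟨hzL, hmaxL⟩ := hζ L
  set g := μ - K *ᵥ ζ L
  have hKvv : 0 < K v v := hc.trans_le (le_diag_of_coercive hcK v)
  have hC₁ : 0 < C₁ := hKvv.trans_le (hC₁ub v)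
  have hsub : ∀ j, feas L ⊆ feas (insert j L) := fun j => feas_mono (subset_insert j L)
  have hgain_v : (g v)⁺ ^ 2 / (2 * C₁) ≤ f (insert v L) - f L := by
    rw [hf, hf]
    refine le_trans ?_ (posPart_sq_div_le_of_isMaxOn hsymm (hsub v hzL) (hζ _).2
      (mem_insert_self v L) hKvv)
    gcongr
    exact hC₁ub v
  have hgain_u : f (insert u L) - f L ≤ (g u)⁺ ^ 2 / (2 * c) := by
    rw [hf, hf]
    exact obj_sub_le_posPart_sq_div hsymm hc hcK hzL hmaxL hu (hζ _).1
  have hgain_u_nonneg : 0 ≤ f (insert u L) - f L := by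
    rw [hf, hf, sub_nonneg]
    exact (hζ _).2 _ (hsub u hzL)
  have hsq : (g u)⁺ ^ 2 ≤ (g v)⁺ ^ 2 :=
    pow_le_pow_left₀ (posPart_nonneg _) (posPart_mono (hvmax u hu)) 2
  calc 3 * c / (4 * C₁) * (f (insert u L) - f L)
      ≤ c / C₁ * (f (insert u L) - f L) := by
        refine mul_le_mul_of_nonneg_right ?_ hgain_u_nonneg
        rw [div_le_div_iff₀ (by positivity) hC₁]
        nlinarith
    _ ≤ c / C₁ * ((g u)⁺ ^ 2 / (2 * c)) := by gcongr
    _ = (g u)⁺ ^ 2 / (2 * C₁) := by field_simp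
    _ ≤ (g v)⁺ ^ 2 / (2 * C₁) := by gcongr
    _ ≤ f (insert v L) - f L := hgain_v

/-- Single-step comparison of ProtoDash and ProtoGreedy. -/
theorem protodash_step_bound (n : ℕ) (hn : 1 ≤ n)
    (K : Matrix (Fin n) (Fin n) ℝ) (hsymm : K.IsSymm) (hpd : K.PosDef)
    (μ : Fin n → ℝ)
    (ζ : Finset (Fin n) → Fin n → ℝ)
    (hζ : ∀ L : Finset (Fin n),
      ζ L ∈ feas L ∧ ∀ w ∈ feas L, obj K μ w ≤ obj K μ (ζ L))
    (f : Finset (Fin n) → ℝ) (hf : ∀ L : Finset (Fin n), f L = obj K μ (ζ L))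
    (c : ℝ) (hc : 0 < c)
    (hcK : ∀ x : Fin n → ℝ, c * (∑ j, (x j) ^ 2) ≤ x ⬝ᵥ (K *ᵥ x))
    (C₁ : ℝ) (hC₁ub : ∀ j, K j j ≤ C₁) (hC₁mem : ∃ j, C₁ = K j j)
    (L : Finset (Fin n)) (hL : L ≠ Finset.univ)
    (v : Fin n) (hv : v ∉ L)
    (hvmax : ∀ j ∉ L, μ j - (K *ᵥ ζ L) j ≤ μ v - (K *ᵥ ζ L) v) :
    ∀ u ∉ L,
      f (insert v L) - f L ≥ (3 * c / (4 * C₁)) * (f (insert u L) - f L) :=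
  protodash_step_bound_general n K hsymm μ ζ hζ f hf c hc hcK C₁ hC₁ub L v hvmax
end
end
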